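/- The function α ↦ ∫_{-∞}^{∞} η(z, α)^2 φ(z) dz is differentiable on (0, ∞), with derivative at α equal to -4[φ(α) - αΦ(-α)]. -/

import Mathlib

open MeasureTheory Filter

/-- Standard normal probability density function. -/
noncomputable def stdNormalPDF (x : ℝ) : ℝ :=
  (Real.sqrt (2 * Real.pi))⁻¹ * Real.exp (-(x ^ 2) / 2)

/-- Standard normal cumulative distribution function. -/
noncomputable def stdNormalCDF (x : ℝ) : ℝ :=
  ∫ t in Set.Iic x, stdNormalPDF t

/-- Soft-thresholding function `η(x, λ) = sign(x) · max(|x| − λ, 0)`. -/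
noncomputable def softThreshold (x lam : ℝ) : ℝ :=
  Real.sign x * max (|x| - lam) 0

/-!
Since `η(z, a)² = ((|z| - a)⁺)²` for `a ≥ 0`, and `a ↦ ((t - a)⁺)²` is `C¹` with derivative
`-2 (t - a)⁺`, dominated differentiation under the integral gives the derivative
`-2 ∫ (|z| - α)⁺ φ(z) dz`. By symmetry this is `-4 ∫_α^∞ (z - α) φ(z) dz`, and
`∫_α^∞ z φ(z) dz = φ(α)` because `-φ` is an antiderivative of `z φ(z)`, while
`∫_α^∞ φ = Φ(-α)` by reflection.
-/

open Set Real Topology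

lemma stdNormalPDF_eq : stdNormalPDF = fun x ↦ (√(2 * π))⁻¹ * exp (-2⁻¹ * x ^ 2) := by
  ext x; rw [stdNormalPDF]; ring_nf

lemma stdNormalPDF_nonneg (x : ℝ) : 0 ≤ stdNormalPDF x := by
  rw [stdNormalPDF]; positivity

lemma stdNormalPDF_neg (x : ℝ) : stdNormalPDF (-x) = stdNormalPDF x := by
  simp [stdNormalPDF]

lemma stdNormalPDF_abs (x : ℝ) : stdNormalPDF |x| = stdNormalPDF x := by
  rcases abs_choice x with h | h <;> rw [h]
  exact stdNormalPDF_neg x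

lemma continuous_stdNormalPDF : Continuous stdNormalPDF := by
  unfold stdNormalPDF; fun_prop

lemma hasDerivAt_stdNormalPDF (x : ℝ) :
    HasDerivAt stdNormalPDF (-x * stdNormalPDF x) x := by
  rw [stdNormalPDF_eq]
  refine ((((hasDerivAt_pow 2 x).const_mul (-2⁻¹)).exp).const_mul (√(2 * π))⁻¹).congr_deriv ?_
  norm_num
  ring

lemma tendsto_stdNormalPDF_atTop : Tendsto stdNormalPDF atTop (𝓝 0) := by
  have h : Tendsto (fun x : ℝ ↦ -2⁻¹ * x ^ 2) atTop atBot :=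
    (tendsto_pow_atTop two_ne_zero).const_mul_atTop_of_neg (by norm_num)
  rw [stdNormalPDF_eq]
  simpa using (tendsto_exp_atBot.comp h).const_mul (√(2 * π))⁻¹

lemma integrable_pow_mul_stdNormalPDF (n : ℕ) :
    Integrable (fun x : ℝ ↦ x ^ n * stdNormalPDF x) := by
  have h := (integrable_rpow_mul_exp_neg_mul_sq (b := 2⁻¹) (by norm_num)
    (s := n) (by linarith [n.cast_nonneg (α := ℝ)])).const_mul (√(2 * π))⁻¹
  simp only [rpow_natCast] at h
  refine h.congr (Eventually.of_forall fun x ↦ ?_)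
  simp only [stdNormalPDF_eq]; ring

lemma integrable_stdNormalPDF : Integrable stdNormalPDF := by
  simpa using integrable_pow_mul_stdNormalPDF 0

lemma integrable_mul_stdNormalPDF : Integrable (fun x : ℝ ↦ x * stdNormalPDF x) := by
  simpa using integrable_pow_mul_stdNormalPDF 1

lemma integrable_abs_mul_stdNormalPDF : Integrable (fun x : ℝ ↦ |x| * stdNormalPDF x) := by
  refine integrable_mul_stdNormalPDF.abs.congr (Eventually.of_forall fun x ↦ ?_)
  simp [abs_mul, abs_of_nonneg (stdNormalPDF_nonneg x)]

lemma integral_Ioi_stdNormalPDF (a : ℝ) :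
    ∫ x in Ioi a, stdNormalPDF x = stdNormalCDF (-a) := by
  simp only [stdNormalCDF, ← integral_comp_neg_Ioi, stdNormalPDF_neg]

lemma integral_Ioi_mul_stdNormalPDF (a : ℝ) :
    ∫ x in Ioi a, x * stdNormalPDF x = stdNormalPDF a := by
  have hderiv (x : ℝ) : HasDerivAt (fun x ↦ -stdNormalPDF x) (x * stdNormalPDF x) x :=
    (hasDerivAt_stdNormalPDF x).neg.congr_deriv (by ring)
  rw [integral_Ioi_of_hasDerivAt_of_tendsto (hderiv a).continuousAt.continuousWithinAt
    (fun x _ ↦ hderiv x) integrable_mul_stdNormalPDF.integrableOn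
    (by simpa using tendsto_stdNormalPDF_atTop.neg)]
  ring

lemma integral_Ioi_sub_mul_stdNormalPDF (a : ℝ) :
    ∫ x in Ioi a, (x - a) * stdNormalPDF x = stdNormalPDF a - a * stdNormalCDF (-a) := by
  simp_rw [sub_mul]
  rw [integral_sub integrable_mul_stdNormalPDF.integrableOn
    (integrable_stdNormalPDF.const_mul a).integrableOn, integral_const_mul,
    integral_Ioi_mul_stdNormalPDF, integral_Ioi_stdNormalPDF]

lemma integral_max_abs_sub_mul_stdNormalPDF {a : ℝ} (ha : 0 ≤ a) :
    ∫ x, max (|x| - a) 0 * stdNormalPDF x = 2 * (stdNormalPDF a - a * stdNormalCDF (-a)) := by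
  rw [show (fun x ↦ max (|x| - a) 0 * stdNormalPDF x)
      = fun x ↦ (fun t ↦ max (t - a) 0 * stdNormalPDF t) |x| from
      funext fun x ↦ by simp only [stdNormalPDF_abs],
    integral_comp_abs (f := fun t ↦ max (t - a) 0 * stdNormalPDF t),
    setIntegral_eq_of_subset_of_forall_sdiff_eq_zero measurableSet_Ioi (Ioi_subset_Ioi ha)
      fun x hx ↦ by
        rw [Set.mem_sdiff, mem_Ioi, mem_Ioi, not_lt] at hx
        simp [max_eq_right (sub_nonpos.2 hx.2)],
    ← integral_Ioi_sub_mul_stdNormalPDF]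
  congr 1
  exact setIntegral_congr_fun measurableSet_Ioi fun x (hx : a < x) ↦ by
    simp [max_eq_left (sub_nonneg.2 hx.le)]

lemma hasDerivAt_max_zero_sq (t : ℝ) :
    HasDerivAt (fun s : ℝ ↦ max s 0 ^ 2) (2 * max t 0) t := by
  refine hasDerivAt_of_hasDerivAt_of_ne' (g := fun s ↦ 2 * max s 0) (x := 0) (fun y hy ↦ ?_)
    (by fun_prop) (by fun_prop) t
  rcases hy.lt_or_gt with hy | hy
  · rw [max_eq_right hy.le, mul_zero]
    exact (hasDerivAt_const y 0).congr_of_eventuallyEq <|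
      (gt_mem_nhds hy).mono fun s hs ↦ by simp [max_eq_right hs.le]
  · rw [max_eq_left hy.le]
    refine ((hasDerivAt_pow 2 y).congr_deriv (by ring)).congr_of_eventuallyEq <|
      (lt_mem_nhds hy).mono fun s hs ↦ by simp [max_eq_left hs.le]

lemma max_abs_sub_zero_le (x a : ℝ) : max (|x| - a) 0 ≤ |x| + |a| :=
  max_le (by linarith [neg_abs_le a]) (by positivity)

lemma integrable_max_abs_sub_sq_mul_stdNormalPDF (a : ℝ) :
    Integrable (fun x ↦ max (|x| - a) 0 ^ 2 * stdNormalPDF x) := by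
  refine (((integrable_pow_mul_stdNormalPDF 2).const_mul 2).add
    (integrable_stdNormalPDF.const_mul (2 * a ^ 2))).mono'
    ((Continuous.mul (by fun_prop) continuous_stdNormalPDF).aestronglyMeasurable)
    (Eventually.of_forall fun x ↦ ?_)
  have hsq : max (|x| - a) 0 ^ 2 ≤ 2 * x ^ 2 + 2 * a ^ 2 := by
    nlinarith [max_abs_sub_zero_le x a, le_max_right (|x| - a) 0, sq_abs x, sq_abs a,
      sq_nonneg (|x| - |a|)]
  rw [norm_of_nonneg (by have := stdNormalPDF_nonneg x; positivity)]
  show _ ≤ 2 * (x ^ 2 * stdNormalPDF x) + 2 * a ^ 2 * stdNormalPDF x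
  nlinarith [stdNormalPDF_nonneg x]

lemma hasDerivAt_integral_max_abs_sub_sq_mul_stdNormalPDF (a : ℝ) :
    HasDerivAt (fun a ↦ ∫ x, max (|x| - a) 0 ^ 2 * stdNormalPDF x)
      (-(2 * ∫ x, max (|x| - a) 0 * stdNormalPDF x)) a := by
  have hmeas (f : ℝ → ℝ) (hf : Continuous f) :
      AEStronglyMeasurable (fun x ↦ f x * stdNormalPDF x) :=
    (hf.mul continuous_stdNormalPDF).aestronglyMeasurable
  have hbound : Integrable (fun x ↦ 2 * (|x| * stdNormalPDF x + (|a| + 1) * stdNormalPDF x)) :=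
    (integrable_abs_mul_stdNormalPDF.add (integrable_stdNormalPDF.const_mul _)).const_mul 2
  have h := hasDerivAt_integral_of_dominated_loc_of_deriv_le (Metric.ball_mem_nhds a one_pos)
    (F := fun b x ↦ max (|x| - b) 0 ^ 2 * stdNormalPDF x)
    (F' := fun b x ↦ -(2 * max (|x| - b) 0) * stdNormalPDF x)
    (Eventually.of_forall fun _ ↦ hmeas _ (by fun_prop))
    (integrable_max_abs_sub_sq_mul_stdNormalPDF a) (hmeas _ (by fun_prop))
    (Eventually.of_forall fun x b hb ↦ ?_) hbound (Eventually.of_forall fun x b _ ↦ ?_)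
  · simpa only [neg_mul, integral_neg, mul_assoc, integral_const_mul] using h.2
  · have hb' : |b| ≤ |a| + 1 := by
      rw [Metric.mem_ball, dist_eq] at hb
      linarith [abs_sub_abs_le_abs_sub b a]
    rw [norm_mul, norm_neg, norm_mul, norm_of_nonneg (stdNormalPDF_nonneg x),
      norm_of_nonneg (le_max_right _ _), norm_two]
    nlinarith [stdNormalPDF_nonneg x, max_abs_sub_zero_le x b]
  · exact ((hasDerivAt_max_zero_sq _).comp b ((hasDerivAt_id b).const_sub _)).mul_const _
      |>.congr_deriv (by simp)

lemma softThreshold_sq (x : ℝ) {a : ℝ} (ha : 0 ≤ a) :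
    softThreshold x a ^ 2 = max (|x| - a) 0 ^ 2 := by
  rcases lt_trichotomy x 0 with hx | rfl | hx
  · simp [softThreshold, sign_of_neg hx]
  · simp [softThreshold, ha]
  · simp [softThreshold, sign_of_pos hx]

theorem null_risk_deriv_in_alpha (α : ℝ) (hα : 0 < α) :
    HasDerivAt (fun α : ℝ => ∫ z : ℝ, softThreshold z α ^ 2 * stdNormalPDF z)
      (-(4 * (stdNormalPDF α - α * stdNormalCDF (-α)))) α := by
  have h := hasDerivAt_integral_max_abs_sub_sq_mul_stdNormalPDF α
  rw [integral_max_abs_sub_mul_stdNormalPDF hα.le] at h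
  refine (h.congr_deriv (by ring)).congr_of_eventuallyEq ?_
  filter_upwards [lt_mem_nhds hα] with a ha
  simp_rw [softThreshold_sq _ ha.le]
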